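/- Assume the CFL condition. Then for every j = 0, …, N and all α, γ ∈ ℤ^d, the grid scheme satisfies |U^j_α − U^j_γ| ≤ L_{u₀}|hα − hγ|^a + t_j L_f |hα − hγ|^a. -/

import Mathlib

open scoped BigOperators

/-- `J_p(ξ) = |ξ|^{p-2} ξ`. -/
noncomputable def Jp (p ξ : ℝ) : ℝ := |ξ| ^ (p - 2) * ξ

/-- The grid point `y_β = h β ∈ ℝ^d` for `β ∈ ℤ^d`. -/
noncomputable def ygrid (d : ℕ) (h : ℝ) (β : Fin d → ℤ) : EuclideanSpace ℝ (Fin d) :=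
  (WithLp.equiv 2 (Fin d → ℝ)).symm (fun i => h * (β i : ℝ))

/-- The discrete `p`-Laplacian `D_p^h ψ(x) = Σ_β J_p(ψ(x+y_β) - ψ(x)) ω_β`. -/
noncomputable def Dph (d : ℕ) (p h : ℝ) (ω : (Fin d → ℤ) → ℝ)
    (ψ : EuclideanSpace ℝ (Fin d) → ℝ) (x : EuclideanSpace ℝ (Fin d)) : ℝ :=
  ∑ᶠ β, Jp p (ψ (x + ygrid d h β) - ψ x) * ω β

/-!
Write `J_p A - J_p B = c (A - B)` with `c` the slope of `J_p` between `A` and `B`: monotonicity of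
`J_p` gives `c ≥ 0`, and its Lipschitz bound on `[-K, K]` gives `c ≤ (p - 1) K ^ (p - 2)`. Then the
difference of one explicit step at grid points `α, γ` is a combination of `U α - U γ` and of the
translated differences `U (α + β) - U (γ + β)` with nonnegative coefficients summing to one, as long
as the CFL condition holds for this `K`. So the step preserves any translation-invariant modulus of
continuity, and the source term adds `τ L_f |x - y| ^ a`. By induction the Hölder constant at step
`j ≤ N` is at most `L_u + N τ L_f`, so the increments over the support of `ω` (where `|y_β| < r`)
are bounded by `K = (L_u + N τ L_f) r ^ a`, the value for which the stated CFL condition is made.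
-/

open Set

lemma Jp_neg (p x : ℝ) : Jp p (-x) = -Jp p x := by
  simp only [Jp, abs_neg]; ring

lemma Jp_of_nonneg {p x : ℝ} (hp : p ≠ 1) (hx : 0 ≤ x) : Jp p x = x ^ (p - 1) := by
  rw [Jp, abs_of_nonneg hx, show p - 1 = (p - 2) + 1 by ring,
    Real.rpow_add_one' hx (by contrapose! hp; linarith)]

lemma Jp_monotone {p : ℝ} (hp : 1 < p) : Monotone (Jp p) :=
  monotone_of_odd_of_monotoneOn_nonneg (Jp_neg p) fun x hx y hy hxy => by
    rw [Jp_of_nonneg hp.ne' hx, Jp_of_nonneg hp.ne' hy]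
    exact Real.rpow_le_rpow hx hxy (by linarith)

lemma abs_rpow_sub_rpow_le {s K x y : ℝ} (hs : 1 ≤ s) (hx : x ∈ Icc 0 K) (hy : y ∈ Icc 0 K) :
    |x ^ s - y ^ s| ≤ s * K ^ (s - 1) * |x - y| := by
  have hderiv : ∀ z ∈ Icc 0 K, HasDerivWithinAt (fun t => t ^ s) (s * z ^ (s - 1)) (Icc 0 K) z :=
    fun z _ => (Real.hasDerivAt_rpow_const (Or.inr hs)).hasDerivWithinAt
  have hbound : ∀ z ∈ Icc 0 K, ‖s * z ^ (s - 1)‖ ≤ s * K ^ (s - 1) := by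
    intro z hz
    rw [Real.norm_eq_abs, abs_of_nonneg (by have := hz.1; positivity)]
    exact mul_le_mul_of_nonneg_left (Real.rpow_le_rpow hz.1 hz.2 (by linarith)) (by linarith)
  simpa only [Real.norm_eq_abs] using
    (convex_Icc 0 K).norm_image_sub_le_of_norm_hasDerivWithin_le hderiv hbound hy hx

lemma abs_Jp_sub_Jp_le {p K a b : ℝ} (hp : 2 ≤ p) (ha : |a| ≤ K) (hb : |b| ≤ K) :
    |Jp p a - Jp p b| ≤ (p - 1) * K ^ (p - 2) * |a - b| := by
  have nonneg_case : ∀ {x y : ℝ}, x ∈ Icc 0 K → y ∈ Icc 0 K →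
      |Jp p x - Jp p y| ≤ (p - 1) * K ^ (p - 2) * |x - y| := by
    intro x y hx hy
    rw [Jp_of_nonneg (by linarith) hx.1, Jp_of_nonneg (by linarith) hy.1,
      show p - 2 = p - 1 - 1 by ring]
    exact abs_rpow_sub_rpow_le (by linarith) hx hy
  have mem_of_nonneg : ∀ {x : ℝ}, 0 ≤ x → |x| ≤ K → x ∈ Icc 0 K :=
    fun hx hxK => ⟨hx, (le_abs_self _).trans hxK⟩
  have mem_of_nonpos : ∀ {x : ℝ}, x ≤ 0 → |x| ≤ K → -x ∈ Icc 0 K :=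
    fun hx hxK => ⟨neg_nonneg.2 hx, (neg_le_abs _).trans hxK⟩
  wlog hba : b ≤ a generalizing a b
  · rw [abs_sub_comm, abs_sub_comm a]
    exact this hb ha (le_of_not_ge hba)
  rcases le_total 0 b with hb0 | hb0
  · exact nonneg_case (mem_of_nonneg (hb0.trans hba) ha) (mem_of_nonneg hb0 hb)
  rcases le_total a 0 with ha0 | ha0
  · simpa only [Jp_neg, neg_sub_neg] using nonneg_case (mem_of_nonpos hb0 hb) (mem_of_nonpos ha0 ha)
  have h0 : (0 : ℝ) ∈ Icc 0 K := ⟨le_rfl, (abs_nonneg a).trans ha⟩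
  have hJ0 : Jp p 0 = 0 := by simp [Jp]
  calc |Jp p a - Jp p b| ≤ |Jp p a - Jp p 0| + |Jp p (-b) - Jp p 0| := by
        simpa only [hJ0, sub_zero, Jp_neg, abs_neg] using abs_sub (Jp p a) (Jp p b)
    _ ≤ (p - 1) * K ^ (p - 2) * |a - 0| + (p - 1) * K ^ (p - 2) * |-b - 0| :=
        add_le_add (nonneg_case (mem_of_nonneg ha0 ha) h0) (nonneg_case (mem_of_nonpos hb0 hb) h0)
    _ = (p - 1) * K ^ (p - 2) * |a - b| := by
        rw [sub_zero, sub_zero, abs_neg, abs_of_nonneg ha0, abs_of_nonpos hb0,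
          abs_of_nonneg (sub_nonneg.2 hba)]
        ring

lemma slope_Jp_le {p K a b : ℝ} (hp : 2 ≤ p) (ha : |a| ≤ K) (hb : |b| ≤ K) :
    slope (Jp p) a b ≤ (p - 1) * K ^ (p - 2) := by
  have hK : 0 ≤ K := (abs_nonneg a).trans ha
  have hC : 0 ≤ (p - 1) * K ^ (p - 2) := mul_nonneg (by linarith) (Real.rpow_nonneg hK _)
  rcases eq_or_ne a b with rfl | hab
  · rwa [slope_same]
  rw [slope_def_field]
  calc (Jp p b - Jp p a) / (b - a) ≤ |Jp p b - Jp p a| / |b - a| := by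
        rw [← abs_div]; exact le_abs_self _
    _ ≤ (p - 1) * K ^ (p - 2) :=
        div_le_of_le_mul₀ (abs_nonneg _) hC (abs_Jp_sub_Jp_le hp hb ha)

section ExplicitScheme

variable {ι : Type*} [AddCommGroup ι]

noncomputable def explicitStep (p τ : ℝ) (T : Finset ι) (ω : ι → ℝ) (v : ι → ℝ) (α : ι) : ℝ :=
  v α + τ * ∑ β ∈ T, Jp p (v (α + β) - v α) * ω β

variable {p τ K : ℝ} {T : Finset ι} {ω : ι → ℝ}

theorem abs_explicitStep_sub_le (hp : 2 ≤ p) (hτ : 0 ≤ τ) (hω : ∀ β, 0 ≤ ω β)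
    {v ρ : ι → ℝ} (hv : ∀ α γ, |v α - v γ| ≤ ρ (α - γ)) (hK : ∀ β ∈ T, ρ β ≤ K)
    (hCFL : τ * ((p - 1) * K ^ (p - 2)) * ∑ β ∈ T, ω β ≤ 1) (α γ : ι) :
    |explicitStep p τ T ω v α - explicitStep p τ T ω v γ| ≤ ρ (α - γ) := by
  set c : ι → ℝ := fun β => slope (Jp p) (v (γ + β) - v γ) (v (α + β) - v α)
  have hc : ∀ β, Jp p (v (α + β) - v α) - Jp p (v (γ + β) - v γ) =
      c β * ((v (α + β) - v α) - (v (γ + β) - v γ)) := fun β => by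
    rw [mul_comm]; exact (sub_smul_slope (Jp p) _ _).symm
  have hcω : ∀ β, 0 ≤ c β * ω β := fun β =>
    mul_nonneg (((Jp_monotone (by linarith)).monotoneOn univ).slope_nonneg trivial trivial) (hω β)
  have hshift : ∀ δ, ∀ β ∈ T, |v (δ + β) - v δ| ≤ K := fun δ β hβ =>
    (hv (δ + β) δ).trans (by rw [add_sub_cancel_left]; exact hK β hβ)
  set σ := ∑ β ∈ T, c β * ω β
  have hσ : τ * σ ≤ 1 := by
    refine le_trans (mul_le_mul_of_nonneg_left ?_ hτ) (by rwa [mul_assoc] at hCFL)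
    rw [Finset.mul_sum]
    exact Finset.sum_le_sum fun β hβ => mul_le_mul_of_nonneg_right
      (slope_Jp_le hp (hshift γ β hβ) (hshift α β hβ)) (hω β)
  have hdiff : explicitStep p τ T ω v α - explicitStep p τ T ω v γ =
      (1 - τ * σ) * (v α - v γ) + τ * ∑ β ∈ T, c β * ω β * (v (α + β) - v (γ + β)) := by
    have hsum : ∑ β ∈ T, Jp p (v (α + β) - v α) * ω β - ∑ β ∈ T, Jp p (v (γ + β) - v γ) * ω β =
        ∑ β ∈ T, c β * ω β * (v (α + β) - v (γ + β)) - σ * (v α - v γ) := by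
      rw [← Finset.sum_sub_distrib, Finset.sum_mul, ← Finset.sum_sub_distrib]
      exact Finset.sum_congr rfl fun β _ => by linear_combination ω β * hc β
    unfold explicitStep
    linear_combination τ * hsum
  have hconvex : |(1 - τ * σ) * (v α - v γ)| +
      |τ * ∑ β ∈ T, c β * ω β * (v (α + β) - v (γ + β))| ≤
      (1 - τ * σ) * ρ (α - γ) + τ * ∑ β ∈ T, c β * ω β * ρ (α - γ) := by
    refine add_le_add ?_ ?_
    · rw [abs_mul, abs_of_nonneg (sub_nonneg.2 hσ)]
      exact mul_le_mul_of_nonneg_left (hv α γ) (sub_nonneg.2 hσ)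
    · rw [abs_mul, abs_of_nonneg hτ]
      refine mul_le_mul_of_nonneg_left ((Finset.abs_sum_le_sum_abs _ _).trans
        (Finset.sum_le_sum fun β _ => ?_)) hτ
      rw [abs_mul, abs_of_nonneg (hcω β), ← add_sub_add_right_eq_sub α γ β]
      exact mul_le_mul_of_nonneg_left (hv (α + β) (γ + β)) (hcω β)
  calc _ ≤ _ := hdiff ▸ abs_add_le _ _
    _ ≤ _ := hconvex
    _ = ρ (α - γ) := by rw [← Finset.sum_mul]; ring

theorem abs_sub_le_of_explicitScheme {N : ℕ} (hp : 2 ≤ p) (hτ : 0 ≤ τ) (hω : ∀ β, 0 ≤ ω β)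
    {V : ℕ → ι → ℝ} {g ρ₀ ρ : ι → ℝ}
    (hV₀ : ∀ α γ, |V 0 α - V 0 γ| ≤ ρ₀ (α - γ)) (hg : ∀ α γ, |g α - g γ| ≤ ρ (α - γ))
    (hV : ∀ j α, V (j + 1) α = explicitStep p τ T ω (V j) α + τ * g α)
    (hK : ∀ β ∈ T, ρ₀ β + N * τ * ρ β ≤ K)
    (hCFL : τ * ((p - 1) * K ^ (p - 2)) * ∑ β ∈ T, ω β ≤ 1) :
    ∀ j ≤ N, ∀ α γ, |V j α - V j γ| ≤ ρ₀ (α - γ) + j * τ * ρ (α - γ) := by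
  have hρ : ∀ β, 0 ≤ ρ β := fun β => by simpa using (abs_nonneg _).trans (hg β 0)
  intro j
  induction j with
  | zero => simpa using hV₀
  | succ j ih =>
    intro hj α γ
    have hjN : (j : ℝ) ≤ N := by exact_mod_cast (by omega : j ≤ N)
    have hstep := abs_explicitStep_sub_le (ρ := fun β => ρ₀ β + j * τ * ρ β) hp hτ hω
      (ih (by omega)) (fun β hβ => by
        have := mul_le_mul_of_nonneg_right (mul_le_mul_of_nonneg_right hjN hτ) (hρ β)
        linarith [hK β hβ]) hCFL α γ
    have hforce : |τ * g α - τ * g γ| ≤ τ * ρ (α - γ) := by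
      rw [← mul_sub, abs_mul, abs_of_nonneg hτ]
      exact mul_le_mul_of_nonneg_left (hg α γ) hτ
    rw [hV, hV, add_sub_add_comm]
    refine (abs_add_le _ _).trans ((add_le_add hstep hforce).trans_eq ?_)
    push_cast; ring

end ExplicitScheme

lemma ygrid_apply (d : ℕ) (h : ℝ) (β : Fin d → ℤ) (i : Fin d) :
    ygrid d h β i = h * β i := rfl

lemma ygrid_add (d : ℕ) (h : ℝ) (α β : Fin d → ℤ) :
    ygrid d h (α + β) = ygrid d h α + ygrid d h β := by
  ext i; simp only [ygrid_apply, PiLp.add_apply, Pi.add_apply, Int.cast_add]; ring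

lemma ygrid_sub (d : ℕ) (h : ℝ) (α β : Fin d → ℤ) :
    ygrid d h (α - β) = ygrid d h α - ygrid d h β := by
  ext i; simp only [ygrid_apply, PiLp.sub_apply, Pi.sub_apply, Int.cast_sub]; ring

lemma finite_setOf_norm_ygrid_le (d : ℕ) {h : ℝ} (hh : 0 < h) (r : ℝ) :
    {β | ‖ygrid d h β‖ ≤ r}.Finite := by
  refine (Set.finite_Icc (-fun _ => ⌈r / h⌉) fun _ => ⌈r / h⌉).subset fun β hβ => ?_
  have hcoord : ∀ i, |β i| ≤ ⌈r / h⌉ := fun i => by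
    have := (PiLp.norm_apply_le (ygrid d h β) i).trans hβ
    rw [ygrid_apply, Real.norm_eq_abs, abs_mul, abs_of_pos hh] at this
    exact_mod_cast ((le_div_iff₀' hh).2 this).trans (Int.le_ceil _)
  exact ⟨fun i => neg_le_of_abs_le (hcoord i), fun i => le_of_abs_le (hcoord i)⟩

lemma Dph_eq_sum {d : ℕ} {p h : ℝ} {ω : (Fin d → ℤ) → ℝ} {T : Finset (Fin d → ℤ)}
    (hT : Function.support ω ⊆ T) (ψ : EuclideanSpace ℝ (Fin d) → ℝ)
    (x : EuclideanSpace ℝ (Fin d)) :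
    Dph d p h ω ψ x = ∑ β ∈ T, Jp p (ψ (x + ygrid d h β) - ψ x) * ω β :=
  finsum_eq_finsetSum_of_support_subset _ ((Function.support_mul_subset_right _ _).trans hT)

lemma nonneg_of_abs_sub_le_mul_norm_rpow {E : Type*} [NormedAddCommGroup E] [Nontrivial E]
    {g : E → ℝ} {L a : ℝ} (hg : ∀ x y, |g x - g y| ≤ L * ‖x - y‖ ^ a) : 0 ≤ L := by
  obtain ⟨x, hx⟩ := exists_ne (0 : E)
  exact nonneg_of_mul_nonneg_left ((abs_nonneg _).trans (hg x 0))
    (Real.rpow_pos_of_pos (norm_pos_iff.2 (sub_ne_zero.2 hx)) a)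

lemma cfl_mul_sum_le_one {τ p M L r a S : ℝ} (hp : 1 ≤ p) (hτ : 0 ≤ τ) (hr : 0 < r)
    (hL : 0 ≤ L) (hS : S ≤ M * r ^ (-p))
    (hCFL : τ * (p - 1) * M * L ^ (p - 2) ≤ r ^ (2 + (1 - a) * (p - 2))) :
    τ * ((p - 1) * (L * r ^ a) ^ (p - 2)) * S ≤ 1 := by
  have hC : 0 ≤ τ * ((p - 1) * (L * r ^ a) ^ (p - 2)) := by
    have : 0 ≤ p - 1 := by linarith
    positivity
  calc τ * ((p - 1) * (L * r ^ a) ^ (p - 2)) * S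
      ≤ τ * ((p - 1) * (L * r ^ a) ^ (p - 2)) * (M * r ^ (-p)) :=
        mul_le_mul_of_nonneg_left hS hC
    _ = τ * (p - 1) * M * L ^ (p - 2) * (r ^ (a * (p - 2)) * r ^ (-p)) := by
        rw [Real.mul_rpow hL (by positivity), ← Real.rpow_mul hr.le]; ring
    _ ≤ r ^ (2 + (1 - a) * (p - 2)) * (r ^ (a * (p - 2)) * r ^ (-p)) := by gcongr
    _ = 1 := by
        rw [← Real.rpow_add hr, ← Real.rpow_add hr,
          show 2 + (1 - a) * (p - 2) + (a * (p - 2) + -p) = 0 by ring, Real.rpow_zero]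

theorem scheme_preserves_holder_modulus_general (d : ℕ) (hd : 1 ≤ d) (p : ℝ) (hp : 2 ≤ p)
    (h r τ : ℝ) (hh : 0 < h) (hr : 0 < r) (hτ : 0 < τ) (N : ℕ) (M : ℝ)
    (ω : (Fin d → ℤ) → ℝ) (hnn : ∀ β, 0 ≤ ω β)
    (hzero : ∀ β, r ≤ ‖ygrid d h β‖ → ω β = 0)
    (hsum : ∑ᶠ β, ω β ≤ M * r ^ (-p))
    (a Lu Lf : ℝ) (ha0 : 0 < a)
    (u₀ f : EuclideanSpace ℝ (Fin d) → ℝ)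
    (hu₀ : ∀ x y, |u₀ x - u₀ y| ≤ Lu * ‖x - y‖ ^ a)
    (hf : ∀ x y, |f x - f y| ≤ Lf * ‖x - y‖ ^ a)
    (U : ℕ → EuclideanSpace ℝ (Fin d) → ℝ)
    (hU0 : ∀ x, U 0 x = u₀ x)
    (hUrec : ∀ j x, U (j + 1) x = U j x + τ * (Dph d p h ω (U j) x + f x))
    (hCFL : τ * (p - 1) * M * (Lu + (N : ℝ) * τ * Lf) ^ (p - 2) ≤
      r ^ (2 + (1 - a) * (p - 2))) :
    ∀ j ≤ N, ∀ α γ : Fin d → ℤ,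
      |U j (ygrid d h α) - U j (ygrid d h γ)| ≤
        Lu * ‖ygrid d h α - ygrid d h γ‖ ^ a +
          (j : ℝ) * τ * (Lf * ‖ygrid d h α - ygrid d h γ‖ ^ a) := by
  have : Nonempty (Fin d) := ⟨⟨0, hd⟩⟩
  have hL : 0 ≤ Lu + N * τ * Lf := by
    have := nonneg_of_abs_sub_le_mul_norm_rpow hu₀
    have := nonneg_of_abs_sub_le_mul_norm_rpow hf
    positivity
  set T := (finite_setOf_norm_ygrid_le d hh r).toFinset
  have hsupp : Function.support ω ⊆ T := fun β hβ => by
    simpa [T] using (lt_of_not_ge fun hrβ => hβ (hzero β hrβ)).le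
  have hK : ∀ β ∈ T, Lu * ‖ygrid d h β‖ ^ a + N * τ * (Lf * ‖ygrid d h β‖ ^ a) ≤
      (Lu + N * τ * Lf) * r ^ a := fun β hβ => by
    have hβr : ‖ygrid d h β‖ ≤ r := by simpa [T] using hβ
    calc _ = (Lu + N * τ * Lf) * ‖ygrid d h β‖ ^ a := by ring
      _ ≤ _ := by gcongr
  intro j hj α γ
  simpa only [ygrid_sub] using abs_sub_le_of_explicitScheme (V := fun j α => U j (ygrid d h α))
    (g := fun α => f (ygrid d h α)) hp hτ.le hnn
    (fun α γ => by simpa [hU0, ygrid_sub] using hu₀ (ygrid d h α) (ygrid d h γ))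
    (fun α γ => by simpa [ygrid_sub] using hf (ygrid d h α) (ygrid d h γ))
    (fun j α => by rw [hUrec, Dph_eq_sum hsupp]; simp only [explicitStep, ygrid_add]; ring) hK
    (cfl_mul_sum_le_one (by linarith) hτ.le hr hL
      (by rwa [← finsum_eq_finsetSum_of_support_subset ω hsupp]) hCFL) j hj α γ

/-- Preservation of the Hölder modulus of continuity of the data (Proposition 3.2). -/
theorem scheme_preserves_holder_modulus (d : ℕ) (hd : 1 ≤ d) (p : ℝ) (hp : 2 ≤ p)
    (h r τ : ℝ) (hh : 0 < h) (hr : 0 < r) (hτ : 0 < τ) (N : ℕ) (M : ℝ) (hM : 0 < M)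
    (ω : (Fin d → ℤ) → ℝ) (hsym : ∀ β, ω (-β) = ω β) (hnn : ∀ β, 0 ≤ ω β)
    (hzero : ∀ β, r ≤ ‖ygrid d h β‖ → ω β = 0)
    (hsum : ∑ᶠ β, ω β ≤ M * r ^ (-p))
    (a Lu Lf : ℝ) (ha0 : 0 < a) (ha1 : a ≤ 1)
    (u₀ f : EuclideanSpace ℝ (Fin d) → ℝ)
    (hu₀b : ∃ C, ∀ x, |u₀ x| ≤ C) (hfb : ∃ C, ∀ x, |f x| ≤ C)
    (hu₀ : ∀ x y, |u₀ x - u₀ y| ≤ Lu * ‖x - y‖ ^ a)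
    (hf : ∀ x y, |f x - f y| ≤ Lf * ‖x - y‖ ^ a)
    (U : ℕ → EuclideanSpace ℝ (Fin d) → ℝ)
    (hU0 : ∀ x, U 0 x = u₀ x)
    (hUrec : ∀ j x, U (j + 1) x = U j x + τ * (Dph d p h ω (U j) x + f x))
    (hCFL : τ * (p - 1) * M * (Lu + (N : ℝ) * τ * Lf) ^ (p - 2) ≤
      r ^ (2 + (1 - a) * (p - 2))) :
    ∀ j ≤ N, ∀ α γ : Fin d → ℤ,
      |U j (ygrid d h α) - U j (ygrid d h γ)| ≤
        Lu * ‖ygrid d h α - ygrid d h γ‖ ^ a +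
          (j : ℝ) * τ * (Lf * ‖ygrid d h α - ygrid d h γ‖ ^ a) :=
  scheme_preserves_holder_modulus_general d hd p hp h r τ hh hr hτ N M ω hnn hzero hsum a Lu Lf ha0
    u₀ f hu₀ hf U hU0 hUrec hCFL
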